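/- The function g is smooth on the open set O = {(x,y,d) ∈ ℝ³ : x > 0, y > 0, xy > |d|}, and at every point p ∈ O at which both partial derivatives ∂g/∂x(p) ≥ 0 and ∂g/∂y(p) ≥ 0, the Hessian of g at p is positive semidefinite, i.e., the second derivative quadratic form D²g(p)[ζ,ζ] ≥ 0 for all ζ ∈ ℝ³. -/
import Mathlib


noncomputable section

def Afun (l x y d : ℝ) : ℝ :=
  (x ^ 2 + y ^ 2) * (l ^ 2 + 1 / l ^ 2) / 2
    + (l ^ 2 - 1 / l ^ 2) * Real.sqrt (x ^ 2 * y ^ 2 - d ^ 2) + 2 * d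

def gfun (l x y d : ℝ) : ℝ :=
  x ^ 2 + y ^ 2 + (l ^ 2 + 1 / l ^ 2) - 2 * Real.sqrt (Afun l x y d)

/-- `g` viewed as a function on `ℝ³ = ℝ × ℝ × ℝ`. -/
def gmap (l : ℝ) : ℝ × ℝ × ℝ → ℝ := fun p => gfun l p.1 p.2.1 p.2.2

/-- The open set `O = {(x,y,d) : x > 0, y > 0, xy > |d|}`. -/
def Oset : Set (ℝ × ℝ × ℝ) := {p | 0 < p.1 ∧ 0 < p.2.1 ∧ |p.2.2| < p.1 * p.2.1}

open scoped Topology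

abbrev V3 := ℝ × ℝ × ℝ

def pi1 : V3 →L[ℝ] ℝ := ContinuousLinearMap.fst ℝ ℝ (ℝ × ℝ)
def pi2 : V3 →L[ℝ] ℝ := (ContinuousLinearMap.fst ℝ ℝ ℝ).comp (ContinuousLinearMap.snd ℝ ℝ (ℝ × ℝ))
def pi3 : V3 →L[ℝ] ℝ := (ContinuousLinearMap.snd ℝ ℝ ℝ).comp (ContinuousLinearMap.snd ℝ ℝ (ℝ × ℝ))

def L3 (a b c : ℝ) : V3 →L[ℝ] ℝ := a • pi1 + b • pi2 + c • pi3

@[simp] lemma L3_apply (a b c : ℝ) (ζ : V3) :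
    L3 a b c ζ = a * ζ.1 + b * ζ.2.1 + c * ζ.2.2 := by
  simp [L3, pi1, pi2, pi3]

def HasD (f : V3 → ℝ) (p : V3) (a b c : ℝ) : Prop := HasFDerivAt f (L3 a b c) p

lemma hasD_of {f : V3 → ℝ} {D : V3 →L[ℝ] ℝ} {p : V3} {a b c : ℝ}
    (h : HasFDerivAt f D p) (hD : ∀ ζ : V3, D ζ = a * ζ.1 + b * ζ.2.1 + c * ζ.2.2) :
    HasD f p a b c := by
  have hDe : D = L3 a b c := ContinuousLinearMap.ext fun ζ => by rw [hD, L3_apply]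
  rw [HasD, ← hDe]; exact h

lemma HasD.congr {f : V3 → ℝ} {p : V3} {a b c a' b' c' : ℝ} (h : HasD f p a b c)
    (ha : a' = a) (hb : b' = b) (hc : c' = c) : HasD f p a' b' c' := by
  subst ha; subst hb; subst hc; exact h

lemma hasD_x (p : V3) : HasD (fun q : V3 => q.1) p 1 0 0 :=
  hasD_of hasFDerivAt_fst (by simp [pi1])

lemma hasD_y (p : V3) : HasD (fun q : V3 => q.2.1) p 0 1 0 :=
  hasD_of (hasFDerivAt_fst.comp p hasFDerivAt_snd) (by simp [pi1])

lemma hasD_d (p : V3) : HasD (fun q : V3 => q.2.2) p 0 0 1 :=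
  hasD_of (hasFDerivAt_snd.comp p hasFDerivAt_snd) (by simp [pi1])

lemma hasD_const (p : V3) (k : ℝ) : HasD (fun _ : V3 => k) p 0 0 0 :=
  hasD_of (hasFDerivAt_const k p) (by simp)

lemma HasD.add {f g : V3 → ℝ} {p : V3} {a b c a' b' c' : ℝ}
    (hf : HasD f p a b c) (hg : HasD g p a' b' c') :
    HasD (fun q => f q + g q) p (a + a') (b + b') (c + c') :=
  hasD_of (HasFDerivAt.add hf hg) (fun ζ => by simp; ring)

lemma HasD.sub {f g : V3 → ℝ} {p : V3} {a b c a' b' c' : ℝ}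
    (hf : HasD f p a b c) (hg : HasD g p a' b' c') :
    HasD (fun q => f q - g q) p (a - a') (b - b') (c - c') :=
  hasD_of (HasFDerivAt.sub hf hg) (fun ζ => by simp; ring)

lemma HasD.mul {f g : V3 → ℝ} {p : V3} {a b c a' b' c' : ℝ}
    (hf : HasD f p a b c) (hg : HasD g p a' b' c') :
    HasD (fun q => f q * g q) p (f p * a' + g p * a) (f p * b' + g p * b) (f p * c' + g p * c) :=
  hasD_of (HasFDerivAt.mul hf hg) (fun ζ => by simp; ring)

lemma HasD.pow {f : V3 → ℝ} {p : V3} {a b c : ℝ} (hf : HasD f p a b c) (n : ℕ) :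
    HasD (fun q => f q ^ n) p (n * f p ^ (n - 1) * a) (n * f p ^ (n - 1) * b)
      (n * f p ^ (n - 1) * c) :=
  hasD_of ((hasDerivAt_pow n (f p)).comp_hasFDerivAt p hf) (fun ζ => by simp; ring)

lemma HasD.inv {f : V3 → ℝ} {p : V3} {a b c : ℝ} (hf : HasD f p a b c) (h0 : f p ≠ 0) :
    HasD (fun q => (f q)⁻¹) p (-(a / f p ^ 2)) (-(b / f p ^ 2)) (-(c / f p ^ 2)) :=
  hasD_of ((hasDerivAt_inv h0).comp_hasFDerivAt p hf) (fun ζ => by simp; ring)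

lemma HasD.div {f g : V3 → ℝ} {p : V3} {a b c a' b' c' : ℝ}
    (hf : HasD f p a b c) (hg : HasD g p a' b' c') (h0 : g p ≠ 0) :
    HasD (fun q => f q / g q) p
      ((a * g p - f p * a') / g p ^ 2) ((b * g p - f p * b') / g p ^ 2)
      ((c * g p - f p * c') / g p ^ 2) := by
  have h := hf.mul (hg.inv h0)
  have h2 : HasD (fun q => f q / g q) p
      (f p * -(a' / g p ^ 2) + (g p)⁻¹ * a) (f p * -(b' / g p ^ 2) + (g p)⁻¹ * b)
      (f p * -(c' / g p ^ 2) + (g p)⁻¹ * c) := by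
    simpa only [div_eq_mul_inv] using h
  exact h2.congr (by field_simp; ring) (by field_simp; ring) (by field_simp; ring)

lemma HasD.sqrt {f : V3 → ℝ} {p : V3} {a b c : ℝ} (hf : HasD f p a b c) (h0 : f p ≠ 0) :
    HasD (fun q => Real.sqrt (f q)) p (a / (2 * Real.sqrt (f p))) (b / (2 * Real.sqrt (f p)))
      (c / (2 * Real.sqrt (f p))) :=
  hasD_of ((Real.hasDerivAt_sqrt h0).comp_hasFDerivAt p hf) (fun ζ => by simp; ring)

lemma HasD.fderiv {f : V3 → ℝ} {p : V3} {a b c : ℝ} (h : HasD f p a b c) :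
    fderiv ℝ f p = L3 a b c := HasFDerivAt.fderiv h

/-! basic positivity facts -/

section pt
variable {l : ℝ} {p : V3}

def sf (p : V3) : ℝ := Real.sqrt (p.1 ^ 2 * p.2.1 ^ 2 - p.2.2 ^ 2)
def Bf (l : ℝ) (p : V3) : ℝ := Real.sqrt (Afun l p.1 p.2.1 p.2.2)

lemma E_pos (hp : p ∈ Oset) : 0 < p.1 ^ 2 * p.2.1 ^ 2 - p.2.2 ^ 2 := by
  obtain ⟨hx, hy, hd⟩ := hp
  nlinarith [abs_nonneg p.2.2, sq_abs p.2.2, mul_pos hx hy]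

lemma sf_pos (hp : p ∈ Oset) : 0 < sf p := Real.sqrt_pos.2 (E_pos hp)

lemma sf_sq (hp : p ∈ Oset) : sf p ^ 2 = p.1 ^ 2 * p.2.1 ^ 2 - p.2.2 ^ 2 :=
  Real.sq_sqrt (E_pos hp).le

lemma M_pos (hl : 1 < l) : 0 < l ^ 2 - 1 / l ^ 2 := by
  have h1 : 1 < l ^ 2 := by nlinarith
  have h2 : 1 / l ^ 2 < 1 := by rw [div_lt_one (by positivity)]; exact h1
  linarith

lemma L_ge (hl : 1 < l) : 2 ≤ l ^ 2 + 1 / l ^ 2 := by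
  have h0 : (0:ℝ) < l ^ 2 := by positivity
  have : (l ^ 2 - 1) ^ 2 / l ^ 2 ≥ 0 := by positivity
  have e : l ^ 2 + 1 / l ^ 2 - 2 = (l ^ 2 - 1) ^ 2 / l ^ 2 := by field_simp; ring
  linarith

lemma A_pos (hl : 1 < l) (hp : p ∈ Oset) : 0 < Afun l p.1 p.2.1 p.2.2 := by
  obtain ⟨hx, hy, hd⟩ := hp
  have hM := M_pos hl
  have hL := L_ge hl
  have hs0 : 0 ≤ Real.sqrt (p.1 ^ 2 * p.2.1 ^ 2 - p.2.2 ^ 2) := Real.sqrt_nonneg _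
  have habs : -p.2.2 ≤ |p.2.2| := neg_le_abs p.2.2
  unfold Afun
  nlinarith [sq_nonneg (p.1 - p.2.1), mul_pos hx hy, mul_nonneg hM.le hs0,
    sq_nonneg (p.1 + p.2.1)]

lemma Bf_pos (hl : 1 < l) (hp : p ∈ Oset) : 0 < Bf l p := Real.sqrt_pos.2 (A_pos hl hp)

lemma Bf_sq (hl : 1 < l) (hp : p ∈ Oset) : Bf l p ^ 2 = Afun l p.1 p.2.1 p.2.2 :=
  Real.sq_sqrt (A_pos hl hp).le

end pt

section deriv1
variable {l : ℝ} {p : V3}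

lemma hasD_sfn (hp : p ∈ Oset) :
    HasD (fun q : V3 => Real.sqrt (q.1 ^ 2 * q.2.1 ^ 2 - q.2.2 ^ 2)) p
      (p.1 * p.2.1 ^ 2 / sf p) (p.1 ^ 2 * p.2.1 / sf p) (-(p.2.2 / sf p)) := by
  have hs0 : sf p ≠ 0 := (sf_pos hp).ne'
  have hE : HasD (fun q : V3 => q.1 ^ 2 * q.2.1 ^ 2 - q.2.2 ^ 2) p
      (2 * p.1 * p.2.1 ^ 2) (2 * p.1 ^ 2 * p.2.1) (-(2 * p.2.2)) := by
    refine ((((hasD_x p).pow 2).mul ((hasD_y p).pow 2)).sub ((hasD_d p).pow 2)).congr ?_ ?_ ?_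
    · push_cast; ring
    · push_cast; ring
    · push_cast; ring
  have hs0' : Real.sqrt (p.1 ^ 2 * p.2.1 ^ 2 - p.2.2 ^ 2) ≠ 0 := hs0
  refine (hE.sqrt (E_pos hp).ne').congr ?_ ?_ ?_ <;>
    · simp only [sf]
      rw [eq_div_iff (by positivity : (2:ℝ) * Real.sqrt (p.1 ^ 2 * p.2.1 ^ 2 - p.2.2 ^ 2) ≠ 0)]
      field_simp
      try ring

lemma hasD_Afn (hl : 1 < l) (hp : p ∈ Oset) :
    HasD (fun q : V3 => Afun l q.1 q.2.1 q.2.2) p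
      ((l ^ 2 + 1 / l ^ 2) * p.1 + (l ^ 2 - 1 / l ^ 2) * (p.1 * p.2.1 ^ 2 / sf p))
      ((l ^ 2 + 1 / l ^ 2) * p.2.1 + (l ^ 2 - 1 / l ^ 2) * (p.1 ^ 2 * p.2.1 / sf p))
      (2 - (l ^ 2 - 1 / l ^ 2) * (p.2.2 / sf p)) := by
  have hs0 : sf p ≠ 0 := (sf_pos hp).ne'
  simp only [Afun]
  have h1 := ((((hasD_x p).pow 2).add ((hasD_y p).pow 2)).mul
      (hasD_const p (l ^ 2 + 1 / l ^ 2))).div (hasD_const p 2) two_ne_zero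
  have h2 := (hasD_const p (l ^ 2 - 1 / l ^ 2)).mul (hasD_sfn hp)
  have h3 := (hasD_const p 2).mul (hasD_d p)
  refine ((h1.add h2).add h3).congr ?_ ?_ ?_ <;>
    · try push_cast
      field_simp
      try ring

lemma hasD_Bfn (hl : 1 < l) (hp : p ∈ Oset) :
    HasD (fun q : V3 => Real.sqrt (Afun l q.1 q.2.1 q.2.2)) p
      (((l ^ 2 + 1 / l ^ 2) * p.1 + (l ^ 2 - 1 / l ^ 2) * (p.1 * p.2.1 ^ 2 / sf p)) / (2 * Bf l p))
      (((l ^ 2 + 1 / l ^ 2) * p.2.1 + (l ^ 2 - 1 / l ^ 2) * (p.1 ^ 2 * p.2.1 / sf p)) / (2 * Bf l p))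
      ((2 - (l ^ 2 - 1 / l ^ 2) * (p.2.2 / sf p)) / (2 * Bf l p)) := by
  exact ((hasD_Afn hl hp).sqrt (A_pos hl hp).ne').congr rfl rfl rfl

def Gx (l : ℝ) (p : V3) : ℝ :=
  2 * p.1 - ((l ^ 2 + 1 / l ^ 2) * p.1 + (l ^ 2 - 1 / l ^ 2) * (p.1 * p.2.1 ^ 2 / sf p)) / Bf l p

def Gy (l : ℝ) (p : V3) : ℝ :=
  2 * p.2.1 - ((l ^ 2 + 1 / l ^ 2) * p.2.1 + (l ^ 2 - 1 / l ^ 2) * (p.1 ^ 2 * p.2.1 / sf p)) / Bf l p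

def Gd (l : ℝ) (p : V3) : ℝ :=
  ((l ^ 2 - 1 / l ^ 2) * (p.2.2 / sf p) - 2) / Bf l p

lemma hasD_gmap (hl : 1 < l) (hp : p ∈ Oset) :
    HasD (gmap l) p (Gx l p) (Gy l p) (Gd l p) := by
  have hB0 : Bf l p ≠ 0 := (Bf_pos hl hp).ne'
  show HasD (fun q : V3 => q.1 ^ 2 + q.2.1 ^ 2 + (l ^ 2 + 1 / l ^ 2)
      - 2 * Real.sqrt (Afun l q.1 q.2.1 q.2.2)) p _ _ _
  refine ((((hasD_x p).pow 2).add ((hasD_y p).pow 2)).add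
      (hasD_const p (l ^ 2 + 1 / l ^ 2))).sub
      ((hasD_const p 2).mul (hasD_Bfn hl hp)) |>.congr ?_ ?_ ?_ <;>
    · simp only [Gx, Gy, Gd]
      push_cast
      field_simp
      ring

end deriv1

section deriv2
variable {l : ℝ} {p : V3}

/-- Hessian numerators (over common denominator `2 B³ s³`). -/
def Nxx (l : ℝ) (p : V3) : ℝ :=
  4 * Bf l p ^ 3 * sf p ^ 3
    - 2 * Bf l p ^ 2 * sf p ^ 2 * ((l ^ 2 + 1 / l ^ 2) * sf p + (l ^ 2 - 1 / l ^ 2) * p.2.1 ^ 2)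
    + 2 * Bf l p ^ 2 * (l ^ 2 - 1 / l ^ 2) * p.1 ^ 2 * p.2.1 ^ 4
    + sf p * p.1 ^ 2 * ((l ^ 2 + 1 / l ^ 2) * sf p + (l ^ 2 - 1 / l ^ 2) * p.2.1 ^ 2) ^ 2

def Nyy (l : ℝ) (p : V3) : ℝ :=
  4 * Bf l p ^ 3 * sf p ^ 3
    - 2 * Bf l p ^ 2 * sf p ^ 2 * ((l ^ 2 + 1 / l ^ 2) * sf p + (l ^ 2 - 1 / l ^ 2) * p.1 ^ 2)
    + 2 * Bf l p ^ 2 * (l ^ 2 - 1 / l ^ 2) * p.2.1 ^ 2 * p.1 ^ 4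
    + sf p * p.2.1 ^ 2 * ((l ^ 2 + 1 / l ^ 2) * sf p + (l ^ 2 - 1 / l ^ 2) * p.1 ^ 2) ^ 2

def Nxy (l : ℝ) (p : V3) : ℝ :=
  -(2 * Bf l p ^ 2 * (l ^ 2 - 1 / l ^ 2) * p.1 * (2 * p.2.1 * sf p ^ 2 - p.1 ^ 2 * p.2.1 ^ 3))
    + sf p * p.1 * p.2.1 * ((l ^ 2 + 1 / l ^ 2) * sf p + (l ^ 2 - 1 / l ^ 2) * p.2.1 ^ 2)
        * ((l ^ 2 + 1 / l ^ 2) * sf p + (l ^ 2 - 1 / l ^ 2) * p.1 ^ 2)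

def Nxd (l : ℝ) (p : V3) : ℝ :=
  -(2 * Bf l p ^ 2 * (l ^ 2 - 1 / l ^ 2) * p.1 * p.2.1 ^ 2 * p.2.2)
    + sf p * p.1 * ((l ^ 2 + 1 / l ^ 2) * sf p + (l ^ 2 - 1 / l ^ 2) * p.2.1 ^ 2)
        * (2 * sf p - (l ^ 2 - 1 / l ^ 2) * p.2.2)

def Nyd (l : ℝ) (p : V3) : ℝ :=
  -(2 * Bf l p ^ 2 * (l ^ 2 - 1 / l ^ 2) * p.1 ^ 2 * p.2.1 * p.2.2)
    + sf p * p.2.1 * ((l ^ 2 + 1 / l ^ 2) * sf p + (l ^ 2 - 1 / l ^ 2) * p.1 ^ 2)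
        * (2 * sf p - (l ^ 2 - 1 / l ^ 2) * p.2.2)

def Ndd (l : ℝ) (p : V3) : ℝ :=
  2 * Bf l p ^ 2 * (l ^ 2 - 1 / l ^ 2) * (sf p ^ 2 + p.2.2 ^ 2)
    + sf p * (2 * sf p - (l ^ 2 - 1 / l ^ 2) * p.2.2) ^ 2

def den (l : ℝ) (p : V3) : ℝ := 2 * Bf l p ^ 3 * sf p ^ 3

set_option maxHeartbeats 1000000 in
lemma hasD_Gx (hl : 1 < l) (hp : p ∈ Oset) :
    HasD (Gx l) p (Nxx l p / den l p) (Nxy l p / den l p) (Nxd l p / den l p) := by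
  have hs0 : sf p ≠ 0 := (sf_pos hp).ne'
  have hB0 : Bf l p ≠ 0 := (Bf_pos hl hp).ne'
  have hnum := ((hasD_const p (l ^ 2 + 1 / l ^ 2)).mul (hasD_x p)).add
    ((hasD_const p (l ^ 2 - 1 / l ^ 2)).mul
      (((hasD_x p).mul ((hasD_y p).pow 2)).div (hasD_sfn hp) hs0))
  have hwhole := ((hasD_const p 2).mul (hasD_x p)).sub (hnum.div (hasD_Bfn hl hp) hB0)
  refine hwhole.congr ?_ ?_ ?_ <;>
    · simp only [Nxx, Nxy, Nxd, den, sf, Bf]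
      set S := Real.sqrt (p.1 ^ 2 * p.2.1 ^ 2 - p.2.2 ^ 2) with hSdef
      set Bv := Real.sqrt (Afun l p.1 p.2.1 p.2.2) with hBdef
      set LL := l ^ 2 + 1 / l ^ 2 with hLdef
      set MM := l ^ 2 - 1 / l ^ 2 with hMdef
      have hS0 : S ≠ 0 := hs0
      have hB0' : Bv ≠ 0 := hB0
      try push_cast
      try norm_num
      field_simp
      ring

set_option maxHeartbeats 1000000 in
lemma hasD_Gy (hl : 1 < l) (hp : p ∈ Oset) :
    HasD (Gy l) p (Nxy l p / den l p) (Nyy l p / den l p) (Nyd l p / den l p) := by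
  have hs0 : sf p ≠ 0 := (sf_pos hp).ne'
  have hB0 : Bf l p ≠ 0 := (Bf_pos hl hp).ne'
  have hnum := ((hasD_const p (l ^ 2 + 1 / l ^ 2)).mul (hasD_y p)).add
    ((hasD_const p (l ^ 2 - 1 / l ^ 2)).mul
      ((((hasD_x p).pow 2).mul (hasD_y p)).div (hasD_sfn hp) hs0))
  have hwhole := ((hasD_const p 2).mul (hasD_y p)).sub (hnum.div (hasD_Bfn hl hp) hB0)
  refine hwhole.congr ?_ ?_ ?_ <;>
    · simp only [Nxy, Nyy, Nyd, den, sf, Bf]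
      set S := Real.sqrt (p.1 ^ 2 * p.2.1 ^ 2 - p.2.2 ^ 2) with hSdef
      set Bv := Real.sqrt (Afun l p.1 p.2.1 p.2.2) with hBdef
      set LL := l ^ 2 + 1 / l ^ 2 with hLdef
      set MM := l ^ 2 - 1 / l ^ 2 with hMdef
      have hS0 : S ≠ 0 := hs0
      have hB0' : Bv ≠ 0 := hB0
      try push_cast
      try norm_num
      field_simp
      ring

set_option maxHeartbeats 1000000 in
lemma hasD_Gd (hl : 1 < l) (hp : p ∈ Oset) :
    HasD (Gd l) p (Nxd l p / den l p) (Nyd l p / den l p) (Ndd l p / den l p) := by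
  have hs0 : sf p ≠ 0 := (sf_pos hp).ne'
  have hB0 : Bf l p ≠ 0 := (Bf_pos hl hp).ne'
  have hnum := ((hasD_const p (l ^ 2 - 1 / l ^ 2)).mul
      ((hasD_d p).div (hasD_sfn hp) hs0)).sub (hasD_const p 2)
  have hwhole := hnum.div (hasD_Bfn hl hp) hB0
  refine hwhole.congr ?_ ?_ ?_ <;>
    · simp only [Nxd, Nyd, Ndd, den, sf, Bf]
      set S := Real.sqrt (p.1 ^ 2 * p.2.1 ^ 2 - p.2.2 ^ 2) with hSdef
      set Bv := Real.sqrt (Afun l p.1 p.2.1 p.2.2) with hBdef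
      set LL := l ^ 2 + 1 / l ^ 2 with hLdef
      set MM := l ^ 2 - 1 / l ^ 2 with hMdef
      have hS0 : S ≠ 0 := hs0
      have hB0' : Bv ≠ 0 := hB0
      try push_cast
      try norm_num
      field_simp
      ring

end deriv2

section main
variable {l : ℝ} {p : V3}

lemma isOpen_Oset : IsOpen Oset := by
  have he : Oset = ({p : V3 | 0 < p.1} ∩ {p : V3 | 0 < p.2.1}) ∩
      {p : V3 | |p.2.2| < p.1 * p.2.1} := by
    ext q; simp only [Oset, Set.mem_setOf_eq, Set.mem_inter_iff]; tauto
  rw [he]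
  exact ((isOpen_lt continuous_const continuous_fst).inter
      (isOpen_lt continuous_const (continuous_fst.comp continuous_snd))).inter
    (isOpen_lt (continuous_snd.comp continuous_snd).abs
      (continuous_fst.mul (continuous_fst.comp continuous_snd)))

lemma contDiffAt_gmap (hl : 1 < l) (hp : p ∈ Oset) : ContDiffAt ℝ (⊤ : ℕ∞) (gmap l) p := by
  have c1 : ContDiffAt ℝ (⊤ : ℕ∞) (fun q : V3 => q.1) p := contDiffAt_fst
  have c2 : ContDiffAt ℝ (⊤ : ℕ∞) (fun q : V3 => q.2.1) p := contDiffAt_fst.comp p contDiffAt_snd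
  have c3 : ContDiffAt ℝ (⊤ : ℕ∞) (fun q : V3 => q.2.2) p := contDiffAt_snd.comp p contDiffAt_snd
  have cE : ContDiffAt ℝ (⊤ : ℕ∞) (fun q : V3 => q.1 ^ 2 * q.2.1 ^ 2 - q.2.2 ^ 2) p :=
    ((c1.pow 2).mul (c2.pow 2)).sub (c3.pow 2)
  have cS : ContDiffAt ℝ (⊤ : ℕ∞) (fun q : V3 => Real.sqrt (q.1 ^ 2 * q.2.1 ^ 2 - q.2.2 ^ 2)) p :=
    (Real.contDiffAt_sqrt (E_pos hp).ne').comp p cE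
  have cA : ContDiffAt ℝ (⊤ : ℕ∞) (fun q : V3 => Afun l q.1 q.2.1 q.2.2) p := by
    show ContDiffAt ℝ (⊤ : ℕ∞) (fun q : V3 => (q.1 ^ 2 + q.2.1 ^ 2) * (l ^ 2 + 1 / l ^ 2) / 2
      + (l ^ 2 - 1 / l ^ 2) * Real.sqrt (q.1 ^ 2 * q.2.1 ^ 2 - q.2.2 ^ 2) + 2 * q.2.2) p
    exact ((((c1.pow 2).add (c2.pow 2)).mul contDiffAt_const).div_const 2).add
      (contDiffAt_const.mul cS) |>.add (contDiffAt_const.mul c3)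
  have cB : ContDiffAt ℝ (⊤ : ℕ∞) (fun q : V3 => Real.sqrt (Afun l q.1 q.2.1 q.2.2)) p :=
    (Real.contDiffAt_sqrt (A_pos hl hp).ne').comp p cA
  show ContDiffAt ℝ (⊤ : ℕ∞) (fun q : V3 => q.1 ^ 2 + q.2.1 ^ 2 + (l ^ 2 + 1 / l ^ 2)
      - 2 * Real.sqrt (Afun l q.1 q.2.1 q.2.2)) p
  exact (((c1.pow 2).add (c2.pow 2)).add contDiffAt_const).sub (contDiffAt_const.mul cB)

end main


set_option maxHeartbeats 1000000 in
/-- `g` is smooth on `O`, and at every point of `O` where `∂g/∂x ≥ 0` and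
`∂g/∂y ≥ 0`, the Hessian of `g` is positive semidefinite. -/
theorem g_smooth_and_hessian_psd (l : ℝ) (hl : 1 < l) :
    ContDiffOn ℝ (⊤ : ℕ∞) (gmap l) Oset ∧
    ∀ p ∈ Oset,
      0 ≤ fderiv ℝ (gmap l) p (1, 0, 0) →
      0 ≤ fderiv ℝ (gmap l) p (0, 1, 0) →
      ∀ ζ : ℝ × ℝ × ℝ, 0 ≤ iteratedFDeriv ℝ 2 (gmap l) p (fun _ => ζ) := by
  constructor
  · intro p hp
    exact (contDiffAt_gmap hl hp).contDiffWithinAt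
  · intro p hp h1 h2 ζ
    obtain ⟨hx, hy, hdxy⟩ := hp
    have hp' : p ∈ Oset := ⟨hx, hy, hdxy⟩
    have hs := sf_pos hp'
    have hB := Bf_pos hl hp'
    have hs2 := sf_sq hp'
    have hM := M_pos hl
    -- first derivative conditions
    have hfd : fderiv ℝ (gmap l) p = L3 (Gx l p) (Gy l p) (Gd l p) := (hasD_gmap hl hp').fderiv
    rw [hfd] at h1 h2
    simp only [L3_apply] at h1 h2
    norm_num at h1 h2
    -- 0 ≤ n1, n2
    have hn1 : 0 ≤ sf p * (2 * Bf l p - (l ^ 2 + 1 / l ^ 2)) - (l ^ 2 - 1 / l ^ 2) * p.2.1 ^ 2 := by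
      have e1 : Gx l p * (sf p * Bf l p)
          = p.1 * (sf p * (2 * Bf l p - (l ^ 2 + 1 / l ^ 2)) - (l ^ 2 - 1 / l ^ 2) * p.2.1 ^ 2) := by
        simp only [Gx]
        field_simp
        ring
      have h0 : 0 ≤ p.1 * (sf p * (2 * Bf l p - (l ^ 2 + 1 / l ^ 2))
          - (l ^ 2 - 1 / l ^ 2) * p.2.1 ^ 2) :=
        e1 ▸ mul_nonneg h1 (mul_nonneg hs.le hB.le)
      exact (mul_nonneg_iff_of_pos_left hx).mp h0
    have hn2 : 0 ≤ sf p * (2 * Bf l p - (l ^ 2 + 1 / l ^ 2)) - (l ^ 2 - 1 / l ^ 2) * p.1 ^ 2 := by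
      have e1 : Gy l p * (sf p * Bf l p)
          = p.2.1 * (sf p * (2 * Bf l p - (l ^ 2 + 1 / l ^ 2)) - (l ^ 2 - 1 / l ^ 2) * p.1 ^ 2) := by
        simp only [Gy]
        field_simp
        ring
      have h0 : 0 ≤ p.2.1 * (sf p * (2 * Bf l p - (l ^ 2 + 1 / l ^ 2))
          - (l ^ 2 - 1 / l ^ 2) * p.1 ^ 2) :=
        e1 ▸ mul_nonneg h2 (mul_nonneg hs.le hB.le)
      exact (mul_nonneg_iff_of_pos_left hy).mp h0
    -- second derivative
    have hGx := hasD_Gx hl hp'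
    have hGy := hasD_Gy hl hp'
    have hGd := hasD_Gd hl hp'
    have hD2 : HasFDerivAt (fun q : V3 => L3 (Gx l q) (Gy l q) (Gd l q))
        (((L3 (Nxx l p / den l p) (Nxy l p / den l p) (Nxd l p / den l p)).smulRight pi1
          + (L3 (Nxy l p / den l p) (Nyy l p / den l p) (Nyd l p / den l p)).smulRight pi2)
          + (L3 (Nxd l p / den l p) (Nyd l p / den l p) (Ndd l p / den l p)).smulRight pi3) p := by
    
      exact ((HasFDerivAt.smul_const hGx pi1).add (HasFDerivAt.smul_const hGy pi2)).add
        (HasFDerivAt.smul_const hGd pi3)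
    have hev : fderiv ℝ (gmap l) =ᶠ[𝓝 p] fun q : V3 => L3 (Gx l q) (Gy l q) (Gd l q) :=
      Filter.eventually_of_mem (isOpen_Oset.mem_nhds hp') (fun q hq => (hasD_gmap hl hq).fderiv)
    have h2fd := (hD2.congr_of_eventuallyEq hev).fderiv
    rw [iteratedFDeriv_two_apply, h2fd]
    simp only [ContinuousLinearMap.add_apply, ContinuousLinearMap.smulRight_apply,
      ContinuousLinearMap.smul_apply, L3_apply,
      smul_eq_mul, pi1, pi2, pi3, ContinuousLinearMap.coe_comp', Function.comp_apply,
      ContinuousLinearMap.coe_fst', ContinuousLinearMap.coe_snd']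
    -- final inequality
    have hden : (0:ℝ) < den l p := by
      simp only [den]
      exact mul_pos (mul_pos two_pos (pow_pos hB 3)) (pow_pos hs 3)
    have hTeq : (Nxx l p / den l p * ζ.1 + Nxy l p / den l p * ζ.2.1 + Nxd l p / den l p * ζ.2.2) * ζ.1
        + (Nxy l p / den l p * ζ.1 + Nyy l p / den l p * ζ.2.1 + Nyd l p / den l p * ζ.2.2) * ζ.2.1
        + (Nxd l p / den l p * ζ.1 + Nyd l p / den l p * ζ.2.1 + Ndd l p / den l p * ζ.2.2) * ζ.2.2
        = (Nxx l p * ζ.1 ^ 2 + Nyy l p * ζ.2.1 ^ 2 + Ndd l p * ζ.2.2 ^ 2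
            + 2 * Nxy l p * ζ.1 * ζ.2.1 + 2 * Nxd l p * ζ.1 * ζ.2.2
            + 2 * Nyd l p * ζ.2.1 * ζ.2.2) / den l p := by
      field_simp
      ring
    rw [hTeq]
    apply div_nonneg _ hden.le
    -- decomposition of the numerator as a sum of nonnegative terms
    have hdecomp : Nxx l p * ζ.1 ^ 2 + Nyy l p * ζ.2.1 ^ 2 + Ndd l p * ζ.2.2 ^ 2
            + 2 * Nxy l p * ζ.1 * ζ.2.1 + 2 * Nxd l p * ζ.1 * ζ.2.2
            + 2 * Nyd l p * ζ.2.1 * ζ.2.2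
        = 2 * Bf l p ^ 2 * sf p ^ 2
            * ((sf p * (2 * Bf l p - (l ^ 2 + 1 / l ^ 2)) - (l ^ 2 - 1 / l ^ 2) * p.2.1 ^ 2) * ζ.1 ^ 2
              + (sf p * (2 * Bf l p - (l ^ 2 + 1 / l ^ 2)) - (l ^ 2 - 1 / l ^ 2) * p.1 ^ 2) * ζ.2.1 ^ 2)
          + 2 * Bf l p ^ 2 * (l ^ 2 - 1 / l ^ 2)
            * ((p.1 * p.2.1 * ζ.2.2 - p.2.2 * (p.2.1 * ζ.1 + p.1 * ζ.2.1)) ^ 2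
              + sf p ^ 2 * (p.2.1 * ζ.1 - p.1 * ζ.2.1) ^ 2)
          + sf p * ((l ^ 2 + 1 / l ^ 2) * sf p * (p.1 * ζ.1 + p.2.1 * ζ.2.1)
              + (l ^ 2 - 1 / l ^ 2) * (p.1 * p.2.1 ^ 2 * ζ.1 + p.1 ^ 2 * p.2.1 * ζ.2.1 - p.2.2 * ζ.2.2)
              + 2 * sf p * ζ.2.2) ^ 2 := by
      simp only [Nxx, Nyy, Ndd, Nxy, Nxd, Nyd]
      linear_combination (2 * Bf l p ^ 2 * (l ^ 2 - 1 / l ^ 2)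
        * (ζ.2.2 ^ 2 - (p.2.1 * ζ.1 + p.1 * ζ.2.1) ^ 2)) * hs2
    rw [hdecomp]
    have t1 : 0 ≤ 2 * Bf l p ^ 2 * sf p ^ 2
        * ((sf p * (2 * Bf l p - (l ^ 2 + 1 / l ^ 2)) - (l ^ 2 - 1 / l ^ 2) * p.2.1 ^ 2) * ζ.1 ^ 2
          + (sf p * (2 * Bf l p - (l ^ 2 + 1 / l ^ 2)) - (l ^ 2 - 1 / l ^ 2) * p.1 ^ 2) * ζ.2.1 ^ 2) :=
      mul_nonneg (by positivity)
        (add_nonneg (mul_nonneg hn1 (sq_nonneg _)) (mul_nonneg hn2 (sq_nonneg _)))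
    have t2 : 0 ≤ 2 * Bf l p ^ 2 * (l ^ 2 - 1 / l ^ 2)
        * ((p.1 * p.2.1 * ζ.2.2 - p.2.2 * (p.2.1 * ζ.1 + p.1 * ζ.2.1)) ^ 2
          + sf p ^ 2 * (p.2.1 * ζ.1 - p.1 * ζ.2.1) ^ 2) :=
      mul_nonneg (mul_nonneg (by positivity) hM.le)
        (add_nonneg (sq_nonneg _) (mul_nonneg (sq_nonneg _) (sq_nonneg _)))
    have t3 : 0 ≤ sf p * ((l ^ 2 + 1 / l ^ 2) * sf p * (p.1 * ζ.1 + p.2.1 * ζ.2.1)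
        + (l ^ 2 - 1 / l ^ 2) * (p.1 * p.2.1 ^ 2 * ζ.1 + p.1 ^ 2 * p.2.1 * ζ.2.1 - p.2.2 * ζ.2.2)
        + 2 * sf p * ζ.2.2) ^ 2 :=
      mul_nonneg hs.le (sq_nonneg _)
    linarith
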